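/- Let B_ext = ⟨V ∪ V_+, F ∪ F_+, E_ext⟩ be a bipartite graph with V, V_+, F, F_+ pairwise disjoint, let ℓ : V ∪ V_+ → F ∪ F_+ be a bijection with ℓ(V) = F and ℓ(V_+) = F_+, and suppose every variable is self-regulating, i.e., the edge (x − ℓ(x)) belongs to E_ext for every x ∈ V ∪ V_+. Let M_diag = {(x − ℓ(x)) : x ∈ V ∪ V_+} and let M = {(x − ℓ(x)) : x ∈ V}, which is a perfect matching of the induced bipartite subgraph B of B_ext on (V, F). Then for all vertices x, y ∈ V ∪ F: if y is reachable from x in the oriented graph G(B, M), then y is reachable from x in the oriented graph G(B_ext, M_diag). (For dynamical models in which each variable is self-regulating, ancestral relations in the causal ordering graph of the equilibrium equations are preserved under model extension.) -/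

import Mathlib

/-- `M` is a perfect matching of the bipartite graph with variable vertices `V`,
equation vertices `F`, and edge set `E` (an edge is a pair `(v, f)` with `v` a
variable vertex and `f` an equation vertex): `M` is a set of edges such that
every vertex of `V ∪ F` is incident to exactly one edge of `M`. -/
def IsPerfectMatching {α : Type*} (V F : Set α) (E M : Set (α × α)) : Prop :=
  M ⊆ E ∧ ∀ x ∈ V ∪ F, ∃! e : α × α, e ∈ M ∧ (e.1 = x ∨ e.2 = x)

/-- The directed edge relation of the oriented graph `G(B, M)`: an edge
`(v − f) ∈ E` is oriented as `f → v` if `(v − f) ∈ M`, and as `v → f` otherwise. -/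
def OStep {α : Type*} (E M : Set (α × α)) (x y : α) : Prop :=
  ((x, y) ∈ E ∧ (x, y) ∉ M) ∨ ((y, x) ∈ E ∧ (y, x) ∈ M)

/-- `y` is reachable from `x` in `G(B, M)`: there is a directed path
(possibly of length zero) from `x` to `y`. -/
def Reach {α : Type*} (E M : Set (α × α)) (x y : α) : Prop :=
  Relation.ReflTransGen (OStep E M) x y

/-- The diagonal edges `(x − ℓ x)` for `x ∈ S`, where `ℓ` is a natural labelling
assigning to each variable its own (equilibrium) equation. -/
def diagEdges {α : Type*} (ℓ : α → α) (S : Set α) : Set (α × α) :=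
  {p : α × α | ∃ x ∈ S, p = (x, ℓ x)}

/- Self-regulation on `V` and `ℓ(V) = F` make the diagonal edges over `V` a perfect matching
`M` of `B`. The extended diagonal matching meets the edges of `B` exactly in `M`, since a diagonal
edge whose variable lies in `V` is already in `M`. Hence every edge of `G(B, M)` occurs in
`G(B_ext, M_diag)` with the same orientation, and directed paths carry over. -/

section Orientation

variable {α : Type*}

theorem mem_diagEdges {ℓ : α → α} {S : Set α} {e : α × α} :
    e ∈ diagEdges ℓ S ↔ e.1 ∈ S ∧ e.2 = ℓ e.1 := by
  constructor
  · rintro ⟨x, hx, rfl⟩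
    exact ⟨hx, rfl⟩
  · rintro ⟨h1, h2⟩
    exact ⟨e.1, h1, Prod.ext rfl h2⟩

theorem diagEdges_mono {ℓ : α → α} {S T : Set α} (h : S ⊆ T) :
    diagEdges ℓ S ⊆ diagEdges ℓ T := fun _ he =>
  mem_diagEdges.2 ⟨h (mem_diagEdges.1 he).1, (mem_diagEdges.1 he).2⟩

theorem isPerfectMatching_diagEdges {V F : Set α} {E : Set (α × α)} {ℓ : α → α}
    (hVF : Disjoint V F) (hℓ : Set.BijOn ℓ V F) (hE : diagEdges ℓ V ⊆ E) :
    IsPerfectMatching V F E (diagEdges ℓ V) := by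
  refine ⟨hE, ?_⟩
  rintro x (hx | hx)
  · refine ⟨(x, ℓ x), ⟨⟨x, hx, rfl⟩, Or.inl rfl⟩, ?_⟩
    rintro _ ⟨⟨z, hz, rfl⟩, rfl | hzx⟩
    · rfl
    · exact (hVF.notMem_of_mem_left hx (hzx ▸ hℓ.mapsTo hz)).elim
  · obtain ⟨z, hz, rfl⟩ := hℓ.surjOn hx
    refine ⟨(z, ℓ z), ⟨⟨z, hz, rfl⟩, Or.inr rfl⟩, ?_⟩
    rintro _ ⟨⟨w, hw, rfl⟩, hwz | hwz⟩
    · exact (hVF.notMem_of_mem_left hw ((show w = ℓ z from hwz) ▸ hℓ.mapsTo hz)).elim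
    · rw [hℓ.injOn hw hz hwz]

variable {E E' M M' : Set (α × α)}

theorem OStep.mono (hE : E ⊆ E') (hM : M ⊆ M') (hM' : ∀ e ∈ E, e ∈ M' → e ∈ M) {x y : α}
    (h : OStep E M x y) : OStep E' M' x y := by
  rcases h with ⟨hxy, hn⟩ | ⟨hyx, hm⟩
  · exact Or.inl ⟨hE hxy, fun h' => hn (hM' _ hxy h')⟩
  · exact Or.inr ⟨hE hyx, hM hm⟩

theorem Reach.mono (hE : E ⊆ E') (hM : M ⊆ M') (hM' : ∀ e ∈ E, e ∈ M' → e ∈ M) {x y : α}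
    (h : Reach E M x y) : Reach E' M' x y :=
  Relation.ReflTransGen.mono (fun _ _ => OStep.mono hE hM hM') _ _ h

end Orientation

theorem selfRegulating_reach_preserved_general {α : Type*}
    (V Vp F Fp : Set α)
    (hVF : Disjoint (V ∪ Vp) (F ∪ Fp))
    (ℓ : α → α)
    (hℓV : Set.BijOn ℓ V F)
    (Eext : Set (α × α))
    (hself : ∀ x ∈ V ∪ Vp, (x, ℓ x) ∈ Eext) :
    IsPerfectMatching V F {e ∈ Eext | e.1 ∈ V ∧ e.2 ∈ F} (diagEdges ℓ V) ∧
    ∀ x ∈ V ∪ F, ∀ y ∈ V ∪ F,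
      Reach {e ∈ Eext | e.1 ∈ V ∧ e.2 ∈ F} (diagEdges ℓ V) x y →
      Reach Eext (diagEdges ℓ (V ∪ Vp)) x y := by
  have hdiag : diagEdges ℓ V ⊆ {e ∈ Eext | e.1 ∈ V ∧ e.2 ∈ F} := by
    rintro _ ⟨x, hx, rfl⟩
    exact ⟨hself x (Or.inl hx), hx, hℓV.mapsTo hx⟩
  refine ⟨isPerfectMatching_diagEdges (hVF.mono Set.subset_union_left Set.subset_union_left)
    hℓV hdiag, fun x _ y _ => Reach.mono (fun _ he => he.1) ?_ ?_⟩
  · exact diagEdges_mono Set.subset_union_left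
  · exact fun e he he' => mem_diagEdges.2 ⟨he.2.1, (mem_diagEdges.1 he').2⟩

/-- Suppose `ℓ` is a natural labelling (a bijection mapping `V` onto
`F` and `V₊` onto `F₊`) and every variable is self-regulating, i.e.
`(x − ℓ x) ∈ E_ext` for every `x ∈ V ∪ V₊`. Let `M_diag` be the diagonal matching of
`B_ext` and `M` the diagonal matching on `V`, which is a perfect matching of the
induced subgraph `B` on `(V, F)`. Then reachability (ancestral relations) between
vertices of `V ∪ F` in `G(B, M)` is preserved in `G(B_ext, M_diag)`. -/
theorem selfRegulating_reach_preserved {α : Type*}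
    (V Vp F Fp : Set α)
    (hVfin : V.Finite) (hVpfin : Vp.Finite) (hFfin : F.Finite) (hFpfin : Fp.Finite)
    (hVVp : Disjoint V Vp) (hFFp : Disjoint F Fp)
    (hVF : Disjoint (V ∪ Vp) (F ∪ Fp))
    (ℓ : α → α)
    (hℓV : Set.BijOn ℓ V F) (hℓVp : Set.BijOn ℓ Vp Fp)
    (Eext : Set (α × α))
    (hE : ∀ e ∈ Eext, e.1 ∈ V ∪ Vp ∧ e.2 ∈ F ∪ Fp)
    (hself : ∀ x ∈ V ∪ Vp, (x, ℓ x) ∈ Eext) :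
    IsPerfectMatching V F {e ∈ Eext | e.1 ∈ V ∧ e.2 ∈ F} (diagEdges ℓ V) ∧
    ∀ x ∈ V ∪ F, ∀ y ∈ V ∪ F,
      Reach {e ∈ Eext | e.1 ∈ V ∧ e.2 ∈ F} (diagEdges ℓ V) x y →
      Reach Eext (diagEdges ℓ (V ∪ Vp)) x y :=
  selfRegulating_reach_preserved_general V Vp F Fp hVF ℓ hℓV Eext hself
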